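/- Let h = (I, E) be a hypergraph with |I| = d and let c_y : I → {1,…,m} be the coloring associated to an integer point y ∈ {1,…,m}^I via c_y(i) = y(i). Then y is a P(h)-generic direction (i.e., the y-maximal face of the hypergraphic polytope P(h) is a vertex) if and only if the coloring c_y is proper. Consequently, the number of P(h)-generic directions y ∈ {1,…,m}^I equals the number of proper colorings of h with m colors. -/

import Mathlib

open Set Pointwise
open scoped Classical

noncomputable section

/-- The pairing of a direction `y` with a point `x`: `y(x) = ∑ i, y i * x i`. -/
def evalDir {I : Type*} [Fintype I] (y x : I → ℝ) : ℝ := ∑ i, y i * x i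

/-- A polytope is the convex hull of a nonempty finite set of points. -/
def IsPolytope {I : Type*} [Fintype I] (P : Set (I → ℝ)) : Prop :=
  ∃ V : Finset (I → ℝ), V.Nonempty ∧ P = convexHull ℝ (V : Set (I → ℝ))

/-- The `y`-maximal face of `P`. -/
def maxFace {I : Type*} [Fintype I] (P : Set (I → ℝ)) (y : I → ℝ) : Set (I → ℝ) :=
  {x ∈ P | ∀ x' ∈ P, evalDir y x' ≤ evalDir y x}

/-- The simplex `Δ_e = conv{ b_i : i ∈ e }` of a hyperedge `e`. -/
def hgSimplex {I : Type*} [Fintype I] [DecidableEq I] (e : Finset I) : Set (I → ℝ) :=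
  convexHull ℝ ((fun i => Pi.single i (1 : ℝ)) '' (e : Set I))

/-- The hypergraphic polytope of the hypergraph with hyperedges `edges a`, `a : ι`:
the Minkowski sum `Σ_a Δ_{edges a}`. -/
def hgPolytope {I : Type*} [Fintype I] [DecidableEq I] {ι : Type*} [Fintype ι]
    (edges : ι → Finset I) : Set (I → ℝ) :=
  {x | ∃ f : ι → I → ℝ, (∀ a, f a ∈ hgSimplex (edges a)) ∧ x = ∑ a, f a}

/-- A heading of a hypergraph: a choice of a head `σ e ∈ e` for every hyperedge `e`. -/
def IsHeading {I : Type*} {ι : Type*} (edges : ι → Finset I) (σ : ι → I) : Prop :=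
  ∀ a, σ a ∈ edges a

/-- A heading contains an oriented cycle `e_1, …, e_ℓ` if `σ(e_j) ∈ e_{j+1} \ {σ(e_{j+1})}`
cyclically (indices mod `ℓ`). -/
def HasOrientedCycle {I : Type*} {ι : Type*} (edges : ι → Finset I) (σ : ι → I) : Prop :=
  ∃ (ℓ : ℕ) (a : ℕ → ι), 0 < ℓ ∧
    ∀ j < ℓ, σ (a j) ∈ edges (a ((j + 1) % ℓ)) ∧ σ (a j) ≠ σ (a ((j + 1) % ℓ))

/-- An acyclic heading: a heading with no oriented cycle. -/
def IsAcyclicHeading {I : Type*} {ι : Type*} (edges : ι → Finset I) (σ : ι → I) : Prop :=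
  IsHeading edges σ ∧ ¬ HasOrientedCycle edges σ

/-- The in-degree vector `δ(σ)` of a heading: `δ(σ)_i` is the number of hyperedges with
head `i`. -/
def inDegVec {I : Type*} [DecidableEq I] {ι : Type*} [Fintype ι] (σ : ι → I) : I → ℝ :=
  fun i => ((Finset.univ.filter fun a => σ a = i).card : ℝ)

/-- A coloring `c` of a hypergraph is proper if every hyperedge has a unique maximal node. -/
def IsProperColoring {I : Type*} {ι : Type*} (edges : ι → Finset I) (c : I → ℕ) : Prop :=
  ∀ a, ∃! i, i ∈ edges a ∧ ∀ j ∈ edges a, c j ≤ c i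

/-- A heading `σ` and a coloring `c` are compatible if, for every hyperedge, the head
carries the maximal color of the hyperedge. -/
def Compatible {I : Type*} {ι : Type*} (edges : ι → Finset I) (σ : ι → I) (c : I → ℕ) :
    Prop :=
  ∀ a, ∀ j ∈ edges a, c j ≤ c (σ a)

/-!
For a direction `y`, maximizing `y` over the Minkowski sum `∑ₑ Δₑ` amounts to maximizing it over
each simplex `Δₑ` separately, and the maximum over `Δₑ` is attained exactly on the face spanned by
the nodes of `e` where `y` is largest. Picking such a node `σ e` in every hyperedge gives the maximizer
`δ(σ) = ∑ₑ b_{σ e}`. If every hyperedge has a unique `y`-maximal node, each summand is forced and the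
maximal face is the single point `δ(σ)`; if some hyperedge has a second maximal node `j`, moving the
head of that hyperedge to `j` gives a different maximizer.
-/

section InDegVec

variable {I : Type*} [DecidableEq I] {ι : Type*} [Fintype ι]

lemma inDegVec_eq_sum_single (σ : ι → I) : inDegVec σ = ∑ a, Pi.single (σ a) (1 : ℝ) := by
  funext i
  simp [inDegVec, Finset.sum_apply, Pi.single_apply, eq_comm]

lemma inDegVec_update_ne {σ : ι → I} {a : ι} {j : I} (hj : j ≠ σ a) :
    inDegVec (Function.update σ a j) ≠ inDegVec σ := by
  intro h
  have hcard := congrFun h (σ a)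
  simp only [inDegVec, Nat.cast_inj] at hcard
  refine (Finset.card_lt_card ?_).ne hcard
  refine Finset.ssubset_iff_of_subset (fun b hb => ?_) |>.mpr ⟨a, by simp, by simp [hj]⟩
  rcases eq_or_ne b a with rfl | hba
  · simp [hj] at hb
  · simpa [Function.update_of_ne hba] using hb

end InDegVec

section HypergraphicPolytope

variable {I : Type*} [Fintype I]

lemma evalDir_sum {ι : Type*} [Fintype ι] (y : I → ℝ) (f : ι → I → ℝ) :
    evalDir y (∑ a, f a) = ∑ a, evalDir y (f a) := by
  simp only [evalDir, Finset.sum_apply, Finset.mul_sum]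
  exact Finset.sum_comm

variable [DecidableEq I]

lemma evalDir_single (y : I → ℝ) (i : I) : evalDir y (Pi.single i 1) = y i := by
  simp [evalDir, Pi.single_apply, mul_ite]

lemma single_mem_hgSimplex {e : Finset I} {i : I} (hi : i ∈ e) :
    Pi.single i (1 : ℝ) ∈ hgSimplex e :=
  subset_convexHull ℝ _ ⟨i, hi, rfl⟩

lemma hgSimplex_subset (e : Finset I) :
    hgSimplex e ⊆ {x | (∀ i, 0 ≤ x i) ∧ (∀ i ∉ e, x i = 0) ∧ ∑ i, x i = 1} := by
  refine convexHull_min ?_ ?_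
  · rintro _ ⟨i, hi, rfl⟩
    refine ⟨fun j => ?_, fun j hj => ?_, by simp⟩
    · by_cases hji : j = i <;> simp [hji]
    · simp [show j ≠ i from fun h => hj (h ▸ hi)]
  · rintro p ⟨hp0, hpe, hps⟩ q ⟨hq0, hqe, hqs⟩ s t hs ht hst
    refine ⟨fun i => ?_, fun i hi => by simp [hpe i hi, hqe i hi], ?_⟩
    · simpa using add_nonneg (mul_nonneg hs (hp0 i)) (mul_nonneg ht (hq0 i))
    · simp only [Pi.add_apply, Pi.smul_apply, smul_eq_mul]
      rw [Finset.sum_add_distrib, ← Finset.mul_sum, ← Finset.mul_sum, hps, hqs, mul_one, mul_one,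
        hst]

section Simplex

variable {e : Finset I} {y : I → ℝ} {M : ℝ} {x : I → ℝ}

lemma mul_le_mul_of_mem_hgSimplex (hM : ∀ i ∈ e, y i ≤ M) (hx : x ∈ hgSimplex e) (i : I) :
    y i * x i ≤ M * x i := by
  obtain ⟨h0, he, -⟩ := hgSimplex_subset e hx
  by_cases hi : i ∈ e
  · exact mul_le_mul_of_nonneg_right (hM i hi) (h0 i)
  · simp [he i hi]

lemma evalDir_le_of_mem_hgSimplex (hM : ∀ i ∈ e, y i ≤ M) (hx : x ∈ hgSimplex e) :
    evalDir y x ≤ M := by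
  calc evalDir y x ≤ ∑ i, M * x i :=
        Finset.sum_le_sum fun i _ => mul_le_mul_of_mem_hgSimplex hM hx i
    _ = M := by rw [← Finset.mul_sum, (hgSimplex_subset e hx).2.2, mul_one]

lemma evalDir_lt_of_mem_hgSimplex (hM : ∀ i ∈ e, y i ≤ M) (hx : x ∈ hgSimplex e) {j : I}
    (hj : y j < M) (hxj : 0 < x j) : evalDir y x < M := by
  calc evalDir y x < ∑ i, M * x i :=
        Finset.sum_lt_sum (fun i _ => mul_le_mul_of_mem_hgSimplex hM hx i)
          ⟨j, Finset.mem_univ j, mul_lt_mul_of_pos_right hj hxj⟩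
    _ = M := by rw [← Finset.mul_sum, (hgSimplex_subset e hx).2.2, mul_one]

lemma eq_single_of_mem_hgSimplex_of_evalDir_eq {i : I} (hi : i ∈ e)
    (hlt : ∀ j ∈ e, j ≠ i → y j < y i) (hx : x ∈ hgSimplex e) (heq : evalDir y x = y i) :
    x = Pi.single i 1 := by
  obtain ⟨h0, he, hs⟩ := hgSimplex_subset e hx
  have hM : ∀ j ∈ e, y j ≤ y i := fun j hj =>
    if hji : j = i then hji ▸ le_rfl else (hlt j hj hji).le
  have hzero : ∀ j, j ≠ i → x j = 0 := by
    intro j hji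
    by_cases hj : j ∈ e
    · by_contra hxj
      exact heq.not_lt
        (evalDir_lt_of_mem_hgSimplex hM hx (hlt j hj hji) ((h0 j).lt_of_ne' hxj))
    · exact he j hj
  have hxi : x i = 1 := by
    rwa [Finset.sum_eq_single i (fun j _ hji => hzero j hji) (by simp)] at hs
  funext j
  by_cases hji : j = i
  · subst hji; simp [hxi]
  · simp [hzero j hji, hji]

end Simplex

lemma evalDir_inDegVec {ι : Type*} [Fintype ι] (y : I → ℝ) (σ : ι → I) :
    evalDir y (inDegVec σ) = ∑ a, y (σ a) := by
  simp only [inDegVec_eq_sum_single, evalDir_sum, evalDir_single]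

variable {ι : Type*} [Fintype ι] {edges : ι → Finset I} {σ : ι → I} {y : I → ℝ}

lemma inDegVec_mem_hgPolytope (hσ : IsHeading edges σ) : inDegVec σ ∈ hgPolytope edges :=
  ⟨fun a => Pi.single (σ a) 1, fun a => single_mem_hgSimplex (hσ a), inDegVec_eq_sum_single σ⟩

lemma evalDir_le_of_mem_hgPolytope (hmax : ∀ a, ∀ j ∈ edges a, y j ≤ y (σ a)) {x : I → ℝ}
    (hx : x ∈ hgPolytope edges) : evalDir y x ≤ ∑ a, y (σ a) := by
  obtain ⟨f, hf, rfl⟩ := hx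
  rw [evalDir_sum]
  exact Finset.sum_le_sum fun a _ => evalDir_le_of_mem_hgSimplex (hmax a) (hf a)

lemma inDegVec_mem_maxFace (hσ : IsHeading edges σ) (hmax : ∀ a, ∀ j ∈ edges a, y j ≤ y (σ a)) :
    inDegVec σ ∈ maxFace (hgPolytope edges) y :=
  ⟨inDegVec_mem_hgPolytope hσ, fun _ hx' =>
    (evalDir_inDegVec y σ).symm ▸ evalDir_le_of_mem_hgPolytope hmax hx'⟩

lemma maxFace_hgPolytope_eq_singleton (hσ : IsHeading edges σ)
    (hlt : ∀ a, ∀ j ∈ edges a, j ≠ σ a → y j < y (σ a)) :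
    maxFace (hgPolytope edges) y = {inDegVec σ} := by
  have hmax : ∀ a, ∀ j ∈ edges a, y j ≤ y (σ a) := fun a j hj =>
    if hja : j = σ a then hja ▸ le_rfl else (hlt a j hj hja).le
  refine Set.eq_singleton_iff_unique_mem.mpr ⟨inDegVec_mem_maxFace hσ hmax, ?_⟩
  rintro _ ⟨⟨f, hf, rfl⟩, hxmax⟩
  have hle : ∀ a ∈ Finset.univ, evalDir y (f a) ≤ y (σ a) := fun a _ =>
    evalDir_le_of_mem_hgSimplex (hmax a) (hf a)
  have hsum : ∑ a, evalDir y (f a) = ∑ a, y (σ a) := by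
    refine le_antisymm (Finset.sum_le_sum hle) ?_
    rw [← evalDir_sum, ← evalDir_inDegVec]
    exact hxmax _ (inDegVec_mem_hgPolytope hσ)
  have heach := (Finset.sum_eq_sum_iff_of_le hle).mp hsum
  rw [inDegVec_eq_sum_single]
  exact Finset.sum_congr rfl fun a _ => eq_single_of_mem_hgSimplex_of_evalDir_eq (hσ a) (hlt a)
    (hf a) (heach a (Finset.mem_univ a))

lemma lt_of_maxFace_hgPolytope_eq_singleton (hσ : IsHeading edges σ)
    (hmax : ∀ a, ∀ j ∈ edges a, y j ≤ y (σ a)) {v : I → ℝ}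
    (hv : maxFace (hgPolytope edges) y = {v}) :
    ∀ a, ∀ j ∈ edges a, j ≠ σ a → y j < y (σ a) := by
  intro a j hj hja
  refine (hmax a j hj).lt_of_ne fun hyj => inDegVec_update_ne hja ?_
  set σ' := Function.update σ a j
  have hσ' : IsHeading edges σ' := fun b => by
    rcases eq_or_ne b a with rfl | hba
    · simpa [σ'] using hj
    · simpa [σ', Function.update_of_ne hba] using hσ b
  have hmax' : ∀ b, ∀ k ∈ edges b, y k ≤ y (σ' b) := fun b k hk => by
    rcases eq_or_ne b a with rfl | hba
    · simpa [σ', hyj] using hmax b k hk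
    · simpa [σ', Function.update_of_ne hba] using hmax b k hk
  have h₁ := hv ▸ inDegVec_mem_maxFace hσ' hmax'
  have h₂ := hv ▸ inDegVec_mem_maxFace hσ hmax
  exact h₁.trans h₂.symm

theorem exists_maxFace_hgPolytope_eq_singleton_iff (hE : ∀ a, (edges a).Nonempty) (y : I → ℝ) :
    (∃ v, maxFace (hgPolytope edges) y = {v}) ↔
      ∀ a, ∃! i, i ∈ edges a ∧ ∀ j ∈ edges a, y j ≤ y i := by
  choose σ hσ hmax using fun a => (edges a).exists_max_image y (hE a)
  constructor
  · rintro ⟨v, hv⟩ a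
    have hlt := lt_of_maxFace_hgPolytope_eq_singleton hσ hmax hv a
    refine ⟨σ a, ⟨hσ a, hmax a⟩, fun j ⟨hj, hjmax⟩ => ?_⟩
    by_contra hja
    exact (hlt j hj hja).not_ge (hjmax _ (hσ a))
  · intro hunique
    refine ⟨inDegVec σ, maxFace_hgPolytope_eq_singleton hσ fun a j hj hja => ?_⟩
    refine (hmax a j hj).lt_of_ne fun hyj => hja ?_
    exact (hunique a).unique ⟨hj, fun k hk => hyj ▸ hmax a k hk⟩ ⟨hσ a, hmax a⟩

end HypergraphicPolytope

theorem stmt11_general {I : Type*} [Fintype I] [DecidableEq I] {ι : Type*} [Fintype ι]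
    (edges : ι → Finset I) (hE : ∀ a, (edges a).Nonempty) (m : ℕ) :
    (∀ y : I → ℕ, (∀ i, y i ∈ Finset.Icc 1 m) →
      ((∃ v, maxFace (hgPolytope edges) (fun i => (y i : ℝ)) = {v}) ↔
        IsProperColoring edges y)) ∧
    Set.ncard {y : I → ℕ | (∀ i, y i ∈ Finset.Icc 1 m) ∧
        ∃ v, maxFace (hgPolytope edges) (fun i => (y i : ℝ)) = {v}} =
      Set.ncard {c : I → ℕ | (∀ i, c i ∈ Finset.Icc 1 m) ∧ IsProperColoring edges c} := by
  have generic_iff : ∀ y : I → ℕ, (∃ v, maxFace (hgPolytope edges) (fun i => (y i : ℝ)) = {v}) ↔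
      IsProperColoring edges y := fun y => by
    simpa only [IsProperColoring, Nat.cast_le] using
      exists_maxFace_hgPolytope_eq_singleton_iff hE (fun i => (y i : ℝ))
  refine ⟨fun y _ => generic_iff y, ?_⟩
  congr 1
  ext y
  exact and_congr_right fun _ => generic_iff y

/-- For a hypergraph `h = (I, E)` and an integer point `y ∈ {1,…,m}^I`,
the direction `y` is `P(h)`-generic (the `y`-maximal face of the hypergraphic polytope is a
vertex) if and only if the associated coloring `c_y(i) = y(i)` is proper. Consequently the
number of `P(h)`-generic directions in `{1,…,m}^I` equals the number of proper colorings of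
`h` with `m` colors. -/
theorem stmt11 {I : Type*} [Fintype I] [DecidableEq I] {ι : Type*} [Fintype ι]
    (edges : ι → Finset I) (hE : ∀ a, (edges a).Nonempty) (m : ℕ) (hm : 0 < m) :
    (∀ y : I → ℕ, (∀ i, y i ∈ Finset.Icc 1 m) →
      ((∃ v, maxFace (hgPolytope edges) (fun i => (y i : ℝ)) = {v}) ↔
        IsProperColoring edges y)) ∧
    Set.ncard {y : I → ℕ | (∀ i, y i ∈ Finset.Icc 1 m) ∧
        ∃ v, maxFace (hgPolytope edges) (fun i => (y i : ℝ)) = {v}} =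
      Set.ncard {c : I → ℕ | (∀ i, c i ∈ Finset.Icc 1 m) ∧ IsProperColoring edges c} :=
  stmt11_general edges hE m
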